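/- For every dimension d ≥ 1, every α > 0, every probability measure μ on ℝ^d, every ε > 0 and every N ∈ ℕ, one has the exact identity E ‖μ_N^ε − μ^ε‖_{H^{−α}}² = (1/N)(‖Φ_ε‖_{H^{−α}}² − ‖μ^ε‖_{H^{−α}}²). Moreover, if α > d/2 and ‖μ‖_{H^{−α}} < ∞, the identity also holds for ε = 0, i.e. E ‖μ_N − μ‖_{H^{−α}}² = (1/N)(‖δ₀‖_{H^{−α}}² − ‖μ‖_{H^{−α}}²). -/

import Mathlib

open MeasureTheory ProbabilityTheory Real Filter
open scoped ENNReal Topology Classical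

noncomputable section

abbrev Esp (d : ℕ) := EuclideanSpace ℝ (Fin d)

/-- The heat kernel on `ℝ^d`. -/
def heatK (d : ℕ) (t : ℝ) (x : Esp d) : ℝ :=
  (4 * π * t) ^ (-(d : ℝ) / 2) * Real.exp (-‖x‖ ^ 2 / (4 * t))

/-- The `H^{-α}` norm. -/
def hNorm (d : ℕ) (α : ℝ) (u : ℝ → Esp d → ℝ) : ℝ≥0∞ :=
  (∫⁻ t in Set.Ioc (0:ℝ) 1, ENNReal.ofReal (t ^ (α - 1)) *
      ∫⁻ x, ENNReal.ofReal ((u t x) ^ 2)) ^ ((1 : ℝ) / 2)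

/-- Heat evolution of `Φ_ε` (of `δ₀` when `ε = 0`): `Φ_ε * Φ_t = Φ_{t+ε}`. -/
def phiEvol (d : ℕ) (ε : ℝ) : ℝ → Esp d → ℝ := fun t x => heatK d (t + ε) x

/-- Heat evolution of `μ^ε = μ * Φ_ε` (of `μ` when `ε = 0`). -/
def measEvol (d : ℕ) (μ : Measure (Esp d)) (ε : ℝ) : ℝ → Esp d → ℝ :=
  fun t x => ∫ y, heatK d (t + ε) (x - y) ∂μ

/-- Heat evolution of `μ_N^ε` (of the empirical measure `μ_N` when `ε = 0`),
for the sample `Y 0, …, Y (N-1)`. -/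
def empEvol (d N : ℕ) (Y : Fin N → Esp d) (ε : ℝ) : ℝ → Esp d → ℝ :=
  fun t x => (N : ℝ)⁻¹ * ∑ i, heatK d (t + ε) (x - Y i)

/-- Heat evolution of `μ_N^ε - μ^ε`. -/
def empDiff (d N : ℕ) (μ : Measure (Esp d)) (Y : Fin N → Esp d) (ε : ℝ) : ℝ → Esp d → ℝ :=
  fun t x => empEvol d N Y ε t x - measEvol d μ ε t x

/-!
For fixed `t` and `x`, the value of `μ_N^ε - μ^ε` evolved for time `t` at `x` is the centred
sample mean of the bounded i.i.d. variables `Φ_{t+ε}(x - X_i)`, so its second moment is `1/N` times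
their variance `∫ Φ_{t+ε}(x - y)² dμ(y) - (μ * Φ_{t+ε})(x)²`. Integrating in `x` (Tonelli and
translation invariance of Lebesgue measure) turns the two terms into `‖Φ_{t+ε}‖²_{L²}` and
`‖μ * Φ_{t+ε}‖²_{L²}`, and integrating against `t^{α-1} dt` on `(0, 1]` gives the identity. The
subtraction is legitimate in `ℝ≥0∞` once `‖μ^ε‖_{H^{-α}} < ∞`; for `ε > 0` this follows from
`‖μ * Φ_s‖_{L²} ≤ ‖Φ_s‖_{L²}` (Jensen) and `‖Φ_s‖²_{L²} ≤ (4πs)^{-d/2}`.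
-/

section SampleMean

variable {Ω α : Type*} [MeasurableSpace Ω] [MeasurableSpace α] {P : Measure Ω} {μ : Measure α}
  {N : ℕ} {X : Fin N → Ω → α} {g : α → ℝ}

theorem variance_sampleMean (hX : ∀ i, MeasurePreserving (X i) P μ) (hXind : iIndepFun X P)
    (hg : Measurable g) (hg2 : MemLp g 2 μ) :
    Var[fun ω => (N : ℝ)⁻¹ * ∑ i, g (X i ω); P] = (N : ℝ)⁻¹ * Var[g; μ] := by
  have hgX : ∀ i, MemLp (fun ω => g (X i ω)) 2 P := fun i => hg2.comp_measurePreserving (hX i)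
  have hsum : Var[∑ i, fun ω => g (X i ω); P] = N * Var[g; μ] := by
    rw [IndepFun.variance_sum (fun i _ => hgX i)
      (fun i _ j _ hij => (hXind.indepFun hij).comp hg hg)]
    simp [(hX _).variance_fun_comp hg.aemeasurable]
  rw [variance_const_mul, ← Finset.sum_fn, hsum]
  rcases eq_or_ne (N : ℝ) 0 with hN | hN
  · simp [hN]
  · field_simp

theorem lintegral_sq_sampleMean_sub [IsProbabilityMeasure P] (hN : 0 < N)
    (hX : ∀ i, MeasurePreserving (X i) P μ) (hXind : iIndepFun X P)
    (hg : Measurable g) (hg2 : MemLp g 2 μ) :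
    ∫⁻ ω, ENNReal.ofReal (((N : ℝ)⁻¹ * ∑ i, g (X i ω) - ∫ y, g y ∂μ) ^ 2) ∂P
      = ENNReal.ofReal ((N : ℝ)⁻¹ * Var[g; μ]) := by
  have hgX : ∀ i, MemLp (fun ω => g (X i ω)) 2 P := fun i => hg2.comp_measurePreserving (hX i)
  have hmean : ∫ ω, (N : ℝ)⁻¹ * ∑ i, g (X i ω) ∂P = ∫ y, g y ∂μ := by
    have hmean_i : ∀ i, ∫ ω, g (X i ω) ∂P = ∫ y, g y ∂μ := fun i => by
      rw [← (hX i).map_eq, integral_map (hX i).aemeasurable hg.aestronglyMeasurable]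
    rw [integral_const_mul, integral_finsetSum _ fun i _ => (hgX i).integrable one_le_two]
    simp [hmean_i, hN.ne']
  rw [← variance_sampleMean hX hXind hg hg2, MemLp.ofReal_variance_eq,
    evariance_eq_lintegral_ofReal, hmean]
  exact (memLp_finsetSum _ fun i _ => hgX i).const_mul _

theorem sq_integral_le_integral_sq [IsProbabilityMeasure μ] (hg : MemLp g 2 μ) :
    (∫ y, g y ∂μ) ^ 2 ≤ ∫ y, g y ^ 2 ∂μ := by
  have := variance_nonneg g μ
  rw [variance_eq_sub hg] at this
  simpa using this

end SampleMean

section Convolution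

variable {G Ω : Type*} [MeasurableSpace G] [AddGroup G] [MeasurableSub₂ G]
  [MeasurableSpace Ω] {ν : Measure G} [SFinite ν] [ν.IsAddRightInvariant]
  {μ : Measure G} [IsProbabilityMeasure μ] {k : G → ℝ} {C : ℝ}

theorem lintegral_ofReal_integral_comp_sub [MeasurableAdd G] {f : G → ℝ} (hf : Measurable f)
    (hf0 : ∀ x, 0 ≤ f x) (hfμ : ∀ x, Integrable (fun y => f (x - y)) μ) :
    ∫⁻ x, ENNReal.ofReal (∫ y, f (x - y) ∂μ) ∂ν = ∫⁻ x, ENNReal.ofReal (f x) ∂ν := by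
  calc _ = ∫⁻ x, ∫⁻ y, ENNReal.ofReal (f (x - y)) ∂μ ∂ν := lintegral_congr fun x =>
        ofReal_integral_eq_lintegral_ofReal (hfμ x) (ae_of_all _ fun y => hf0 _)
    _ = ∫⁻ y, ∫⁻ x, ENNReal.ofReal (f (x - y)) ∂ν ∂μ :=
        lintegral_lintegral_swap (by fun_prop)
    _ = ∫⁻ _, ∫⁻ x, ENNReal.ofReal (f x) ∂ν ∂μ := lintegral_congr fun y =>
        lintegral_sub_right_eq_self (fun z => ENNReal.ofReal (f z)) y
    _ = _ := by simp

theorem memLp_comp_sub_of_bound (hk : Measurable k) (hkC : ∀ x, |k x| ≤ C) (x : G) :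
    MemLp (fun y => k (x - y)) 2 μ :=
  (memLp_top_of_bound (hk.comp (measurable_const.sub measurable_id)).aestronglyMeasurable C
    (ae_of_all _ fun _ => hkC _)).mono_exponent le_top

theorem lintegral_sq_integral_comp_sub_le [MeasurableAdd G] (hk : Measurable k)
    (hkC : ∀ x, |k x| ≤ C) :
    ∫⁻ x, ENNReal.ofReal ((∫ y, k (x - y) ∂μ) ^ 2) ∂ν ≤ ∫⁻ x, ENNReal.ofReal (k x ^ 2) ∂ν := by
  rw [← lintegral_ofReal_integral_comp_sub (μ := μ) (by fun_prop) (fun x => sq_nonneg (k x))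
    fun x => (memLp_comp_sub_of_bound hk hkC x).integrable_sq]
  exact lintegral_mono fun x =>
    ENNReal.ofReal_le_ofReal (sq_integral_le_integral_sq (memLp_comp_sub_of_bound hk hkC x))

theorem lintegral_lintegral_sq_sampleMean_comp_sub [MeasurableAdd G] {N : ℕ} (hN : 0 < N)
    {P : Measure Ω} [IsProbabilityMeasure P] {X : Fin N → Ω → G}
    (hX : ∀ i, MeasurePreserving (X i) P μ) (hXind : iIndepFun X P)
    (hk : Measurable k) (hkC : ∀ x, |k x| ≤ C) (hk2 : ∫⁻ x, ENNReal.ofReal (k x ^ 2) ∂ν ≠ ⊤) :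
    ∫⁻ ω, ∫⁻ x, ENNReal.ofReal (((N : ℝ)⁻¹ * ∑ i, k (x - X i ω) - ∫ y, k (x - y) ∂μ) ^ 2) ∂ν ∂P
      = (N : ℝ≥0∞)⁻¹ * (∫⁻ x, ENNReal.ofReal (k x ^ 2) ∂ν
          - ∫⁻ x, ENNReal.ofReal ((∫ y, k (x - y) ∂μ) ^ 2) ∂ν) := by
  have hconv : Measurable fun x => ∫ y, k (x - y) ∂μ :=
    (StronglyMeasurable.integral_prod_right' (f := fun q : G × G => k (q.1 - q.2))
      (by fun_prop)).measurable
  have hpointwise : ∀ x, ∫⁻ ω, ENNReal.ofReal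
      (((N : ℝ)⁻¹ * ∑ i, k (x - X i ω) - ∫ y, k (x - y) ∂μ) ^ 2) ∂P
      = (N : ℝ≥0∞)⁻¹ * (ENNReal.ofReal (∫ y, k (x - y) ^ 2 ∂μ)
          - ENNReal.ofReal ((∫ y, k (x - y) ∂μ) ^ 2)) := fun x => by
    have hgx := memLp_comp_sub_of_bound (μ := μ) hk hkC x
    rw [lintegral_sq_sampleMean_sub hN hX hXind (by fun_prop) hgx, variance_eq_sub hgx,
      ENNReal.ofReal_mul (by positivity), ENNReal.ofReal_inv_of_pos (by exact_mod_cast hN),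
      ENNReal.ofReal_natCast, ENNReal.ofReal_sub _ (sq_nonneg _)]
    simp
  have hmeas : Measurable fun q : Ω × G => ENNReal.ofReal
      (((N : ℝ)⁻¹ * ∑ i, k (q.2 - X i q.1) - ∫ y, k (q.2 - y) ∂μ) ^ 2) := by
    refine (((measurable_const.mul (Finset.measurable_sum _ fun i _ => ?_)).sub
      (hconv.comp measurable_snd)).pow_const 2).ennreal_ofReal
    exact hk.comp (measurable_snd.sub ((hX i).measurable.comp measurable_fst))
  have hjensen : ∀ x, ENNReal.ofReal ((∫ y, k (x - y) ∂μ) ^ 2)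
      ≤ ENNReal.ofReal (∫ y, k (x - y) ^ 2 ∂μ) := fun x =>
    ENNReal.ofReal_le_ofReal (sq_integral_le_integral_sq (memLp_comp_sub_of_bound hk hkC x))
  rw [lintegral_lintegral_swap hmeas.aemeasurable]
  simp_rw [hpointwise]
  rw [lintegral_const_mul' _ _ (by simp [hN.ne']),
    lintegral_sub (by fun_prop)
      (ne_top_of_le_ne_top hk2 (lintegral_sq_integral_comp_sub_le hk hkC)) (ae_of_all _ hjensen),
    lintegral_ofReal_integral_comp_sub (by fun_prop) (fun x => sq_nonneg (k x))
      fun x => (memLp_comp_sub_of_bound hk hkC x).integrable_sq]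

end Convolution

theorem lintegral_lintegral_eq_const_mul_sub {Ω T : Type*} [MeasurableSpace Ω] [MeasurableSpace T]
    {P : Measure Ω} [SFinite P] {ν : Measure T} [SFinite ν] {F : Ω → T → ℝ≥0∞}
    (hF : Measurable (Function.uncurry F)) {f g : T → ℝ≥0∞} (hg : Measurable g)
    (hgf : ∀ᵐ t ∂ν, g t ≤ f t) (hg_top : ∫⁻ t, g t ∂ν ≠ ⊤) {c : ℝ≥0∞} (hc : c ≠ ⊤)
    (hF_eq : ∀ᵐ t ∂ν, ∫⁻ ω, F ω t ∂P = c * (f t - g t)) :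
    ∫⁻ ω, ∫⁻ t, F ω t ∂ν ∂P = c * (∫⁻ t, f t ∂ν - ∫⁻ t, g t ∂ν) := by
  rw [lintegral_lintegral_swap hF.aemeasurable, lintegral_congr_ae hF_eq,
    lintegral_const_mul' _ _ hc, lintegral_sub hg hg_top hgf]

section HeatKernel

variable {d : ℕ} {s : ℝ}

theorem measurable_heatK_uncurry (d : ℕ) :
    Measurable fun p : ℝ × Esp d => heatK d p.1 p.2 := by
  unfold heatK
  fun_prop

theorem measurable_heatK (d : ℕ) (s : ℝ) : Measurable (heatK d s) :=
  (measurable_heatK_uncurry d).comp measurable_prodMk_left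

theorem heatK_pos (hs : 0 < s) (x : Esp d) : 0 < heatK d s x := by
  unfold heatK
  positivity

theorem heatK_le (hs : 0 < s) (x : Esp d) : heatK d s x ≤ (4 * π * s) ^ (-(d : ℝ) / 2) := by
  refine mul_le_of_le_one_right (by positivity) (Real.exp_le_one_iff.2 ?_)
  exact div_nonpos_of_nonpos_of_nonneg (neg_nonpos.2 (by positivity)) (by positivity)

theorem abs_heatK_le (hs : 0 < s) (x : Esp d) : |heatK d s x| ≤ (4 * π * s) ^ (-(d : ℝ) / 2) :=
  (abs_of_pos (heatK_pos hs x)).le.trans (heatK_le hs x)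

theorem integral_heatK (hs : 0 < s) : ∫ x, heatK d s x = 1 := by
  have hb : (0 : ℝ) < 1 / (4 * s) := by positivity
  have hgauss := GaussianFourier.integral_rexp_neg_mul_sq_norm (V := Esp d) hb
  rw [finrank_euclideanSpace_fin] at hgauss
  have heq : ∀ x : Esp d, heatK d s x
      = (4 * π * s) ^ (-(d : ℝ) / 2) * Real.exp (-(1 / (4 * s)) * ‖x‖ ^ 2) := fun x => by
    unfold heatK
    ring_nf
  simp_rw [heq]
  rw [integral_const_mul, hgauss, show π / (1 / (4 * s)) = 4 * π * s by field_simp,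
    ← Real.rpow_add (by positivity), neg_div, neg_add_cancel, Real.rpow_zero]

theorem lintegral_heatK (hs : 0 < s) : ∫⁻ x, ENNReal.ofReal (heatK d s x) = 1 := by
  have hint : Integrable (heatK d s) :=
    Integrable.of_integral_ne_zero (by simp [integral_heatK hs])
  rw [← ofReal_integral_eq_lintegral_ofReal hint (ae_of_all _ fun x => (heatK_pos hs x).le),
    integral_heatK hs, ENNReal.ofReal_one]

theorem lintegral_heatK_sq_le (hs : 0 < s) :
    ∫⁻ x, ENNReal.ofReal (heatK d s x ^ 2) ≤ ENNReal.ofReal ((4 * π * s) ^ (-(d : ℝ) / 2)) := by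
  calc ∫⁻ x, ENNReal.ofReal (heatK d s x ^ 2)
      ≤ ∫⁻ x, ENNReal.ofReal ((4 * π * s) ^ (-(d : ℝ) / 2)) * ENNReal.ofReal (heatK d s x) :=
        lintegral_mono fun x => by
          rw [← ENNReal.ofReal_mul (by positivity), sq]
          exact ENNReal.ofReal_le_ofReal
            (mul_le_mul_of_nonneg_right (heatK_le hs x) (heatK_pos hs x).le)
    _ = _ := by rw [lintegral_const_mul' _ _ ENNReal.ofReal_ne_top, lintegral_heatK hs, mul_one]

end HeatKernel

section HeatEvolution

variable {d N : ℕ} {α ε t : ℝ} {μ : Measure (Esp d)} [IsProbabilityMeasure μ]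

theorem hNorm_sq (u : ℝ → Esp d → ℝ) :
    hNorm d α u ^ 2 = ∫⁻ t in Set.Ioc (0 : ℝ) 1, ENNReal.ofReal (t ^ (α - 1)) *
      ∫⁻ x, ENNReal.ofReal (u t x ^ 2) := by
  rw [hNorm, ← ENNReal.rpow_natCast, ← ENNReal.rpow_mul]
  norm_num

theorem measurable_measEvol_uncurry (μ : Measure (Esp d)) [IsProbabilityMeasure μ] (ε : ℝ) :
    Measurable fun p : ℝ × Esp d => measEvol d μ ε p.1 p.2 :=
  (StronglyMeasurable.integral_prod_right'
    (f := fun q : (ℝ × Esp d) × Esp d => heatK d (q.1.1 + ε) (q.1.2 - q.2))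
    ((measurable_heatK_uncurry d).comp ((measurable_fst.fst.add_const ε).prodMk
      (measurable_fst.snd.sub measurable_snd))).stronglyMeasurable).measurable

theorem lintegral_sq_measEvol_le (ht : 0 < t + ε) :
    ∫⁻ x, ENNReal.ofReal (measEvol d μ ε t x ^ 2)
      ≤ ∫⁻ x, ENNReal.ofReal (phiEvol d ε t x ^ 2) :=
  lintegral_sq_integral_comp_sub_le (measurable_heatK d _) (abs_heatK_le ht)

theorem lintegral_lintegral_sq_empDiff (hN : 0 < N) {Ω : Type*} [MeasurableSpace Ω]
    {P : Measure Ω} [IsProbabilityMeasure P] {X : Fin N → Ω → Esp d}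
    (hX : ∀ i, MeasurePreserving (X i) P μ) (hXind : iIndepFun X P) (ht : 0 < t + ε) :
    ∫⁻ ω, (∫⁻ x, ENNReal.ofReal (empDiff d N μ (fun i => X i ω) ε t x ^ 2)) ∂P
      = (N : ℝ≥0∞)⁻¹ * ((∫⁻ x, ENNReal.ofReal (phiEvol d ε t x ^ 2))
          - ∫⁻ x, ENNReal.ofReal (measEvol d μ ε t x ^ 2)) :=
  lintegral_lintegral_sq_sampleMean_comp_sub hN hX hXind (measurable_heatK d _) (abs_heatK_le ht)
    (ne_top_of_le_ne_top ENNReal.ofReal_ne_top (lintegral_heatK_sq_le ht))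

theorem hNorm_measEvol_le (hε : 0 ≤ ε) :
    hNorm d α (measEvol d μ ε) ≤ hNorm d α (phiEvol d ε) := by
  refine ENNReal.rpow_le_rpow (setLIntegral_mono' measurableSet_Ioc fun t ht => ?_) (by norm_num)
  exact mul_le_mul_right (lintegral_sq_measEvol_le (by linarith [ht.1])) _

theorem hNorm_phiEvol_ne_top (hα : 0 < α) (hε : 0 < ε) : hNorm d α (phiEvol d ε) ≠ ⊤ := by
  set C := ENNReal.ofReal ((4 * π * ε) ^ (-(d : ℝ) / 2))
  have hw : IntegrableOn (fun t : ℝ => t ^ (α - 1)) (Set.Ioc 0 1) :=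
    (intervalIntegral.intervalIntegrable_rpow' (by linarith)).1
  have hQ : ∀ t ∈ Set.Ioc (0 : ℝ) 1, ∫⁻ x, ENNReal.ofReal (phiEvol d ε t x ^ 2) ≤ C := by
    intro t ht
    refine (lintegral_heatK_sq_le (by linarith [ht.1])).trans (ENNReal.ofReal_le_ofReal ?_)
    exact Real.rpow_le_rpow_of_nonpos (by positivity) (by nlinarith [ht.1, Real.pi_pos])
      (by rw [neg_div]; exact neg_nonpos.2 (by positivity))
  refine ENNReal.rpow_ne_top_of_nonneg (by norm_num) (ne_top_of_le_ne_top ?_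
    (setLIntegral_mono' measurableSet_Ioc fun t ht => mul_le_mul_right (hQ t ht) _))
  rw [lintegral_mul_const' _ _ ENNReal.ofReal_ne_top]
  exact ENNReal.mul_ne_top hw.lintegral_lt_top.ne ENNReal.ofReal_ne_top

theorem lintegral_hNorm_sq_empDiff (hN : 0 < N) {Ω : Type*} [MeasurableSpace Ω] {P : Measure Ω}
    [IsProbabilityMeasure P] {X : Fin N → Ω → Esp d} (hX : ∀ i, MeasurePreserving (X i) P μ)
    (hXind : iIndepFun X P) (hε : 0 ≤ ε) (hfin : hNorm d α (measEvol d μ ε) ≠ ⊤) :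
    ∫⁻ ω, hNorm d α (empDiff d N μ (fun i => X i ω) ε) ^ 2 ∂P
      = (N : ℝ≥0∞)⁻¹ * (hNorm d α (phiEvol d ε) ^ 2 - hNorm d α (measEvol d μ ε) ^ 2) := by
  have hw : Measurable fun t : ℝ => ENNReal.ofReal (t ^ (α - 1)) := by fun_prop
  have hM : Measurable fun t => ∫⁻ x, ENNReal.ofReal (measEvol d μ ε t x ^ 2) :=
    Measurable.lintegral_prod_right' ((measurable_measEvol_uncurry μ ε).pow_const 2).ennreal_ofReal
  have hE : Measurable fun p : Ω × ℝ =>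
      ∫⁻ x, ENNReal.ofReal (empDiff d N μ (fun i => X i p.1) ε p.2 x ^ 2) := by
    refine Measurable.lintegral_prod_right' (f := fun q : (Ω × ℝ) × Esp d =>
      ENNReal.ofReal (empDiff d N μ (fun i => X i q.1.1) ε q.1.2 q.2 ^ 2)) ?_
    refine (((measurable_const.mul (Finset.measurable_sum _ fun i _ => ?_)).sub
      ((measurable_measEvol_uncurry μ ε).comp (measurable_fst.snd.prodMk measurable_snd))).pow_const
        2).ennreal_ofReal
    exact (measurable_heatK_uncurry d).comp ((measurable_fst.snd.add_const ε).prodMk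
      (measurable_snd.sub ((hX i).measurable.comp measurable_fst.fst)))
  simp only [hNorm_sq]
  refine lintegral_lintegral_eq_const_mul_sub ((hw.comp measurable_snd).mul hE) (hw.mul hM) ?_
    (hNorm_sq (measEvol d μ ε) ▸ ENNReal.pow_ne_top hfin) (by simp [hN.ne']) ?_
  · filter_upwards [ae_restrict_mem measurableSet_Ioc] with t ht
    exact mul_le_mul_right (lintegral_sq_measEvol_le (by linarith [ht.1])) _
  · filter_upwards [ae_restrict_mem measurableSet_Ioc] with t ht
    rw [lintegral_const_mul' _ _ ENNReal.ofReal_ne_top,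
      lintegral_lintegral_sq_empDiff hN hX hXind (by linarith [ht.1]), mul_left_comm,
      ENNReal.mul_sub fun _ _ => ENNReal.ofReal_ne_top, Pi.mul_apply]

end HeatEvolution

theorem empirical_measure_exact_second_moment_H_general
    (d : ℕ) (α : ℝ) (hα : 0 < α)
    (μ : Measure (Esp d)) [IsProbabilityMeasure μ]
    (N : ℕ) (hN : 0 < N)
    (Ω : Type) [MeasurableSpace Ω] (P : Measure Ω) [IsProbabilityMeasure P]
    (X : Fin N → Ω → Esp d)
    (hXm : ∀ i, Measurable (X i))
    (hXlaw : ∀ i, Measure.map (X i) P = μ)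
    (hXind : iIndepFun X P) :
    (∀ ε : ℝ, 0 < ε →
      (∫⁻ ω, hNorm d α (empDiff d N μ (fun i => X i ω) ε) ^ 2 ∂P) =
        (N : ℝ≥0∞)⁻¹ * (hNorm d α (phiEvol d ε) ^ 2 - hNorm d α (measEvol d μ ε) ^ 2)) ∧
    ((d : ℝ) / 2 < α → hNorm d α (measEvol d μ 0) ≠ ⊤ →
      (∫⁻ ω, hNorm d α (empDiff d N μ (fun i => X i ω) 0) ^ 2 ∂P) =
        (N : ℝ≥0∞)⁻¹ * (hNorm d α (phiEvol d 0) ^ 2 - hNorm d α (measEvol d μ 0) ^ 2)) := by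
  have hX : ∀ i, MeasurePreserving (X i) P μ := fun i => ⟨hXm i, hXlaw i⟩
  refine ⟨fun ε hε => ?_, fun _ hfin => lintegral_hNorm_sq_empDiff hN hX hXind le_rfl hfin⟩
  exact lintegral_hNorm_sq_empDiff hN hX hXind hε.le
    (ne_top_of_le_ne_top (hNorm_phiEvol_ne_top hα hε) (hNorm_measEvol_le hε.le))

/-- Exact second moment identity in `H^{-α}`, for `ε > 0` and also for `ε = 0`
when `α > d/2` and `μ ∈ H^{-α}`. -/
theorem empirical_measure_exact_second_moment_H
    (d : ℕ) (hd : 1 ≤ d) (α : ℝ) (hα : 0 < α)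
    (μ : Measure (Esp d)) [IsProbabilityMeasure μ]
    (N : ℕ) (hN : 0 < N)
    (Ω : Type) [MeasurableSpace Ω] (P : Measure Ω) [IsProbabilityMeasure P]
    (X : Fin N → Ω → Esp d)
    (hXm : ∀ i, Measurable (X i))
    (hXlaw : ∀ i, Measure.map (X i) P = μ)
    (hXind : iIndepFun X P) :
    (∀ ε : ℝ, 0 < ε →
      (∫⁻ ω, hNorm d α (empDiff d N μ (fun i => X i ω) ε) ^ 2 ∂P) =
        (N : ℝ≥0∞)⁻¹ * (hNorm d α (phiEvol d ε) ^ 2 - hNorm d α (measEvol d μ ε) ^ 2)) ∧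
    ((d : ℝ) / 2 < α → hNorm d α (measEvol d μ 0) ≠ ⊤ →
      (∫⁻ ω, hNorm d α (empDiff d N μ (fun i => X i ω) 0) ^ 2 ∂P) =
        (N : ℝ≥0∞)⁻¹ * (hNorm d α (phiEvol d 0) ^ 2 - hNorm d α (measEvol d μ 0) ^ 2)) :=
  empirical_measure_exact_second_moment_H_general d α hα μ N hN Ω P X hXm hXlaw hXind

end
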